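/- Each of the perfect boxes P⁴⁴, P⁴⁵, P⁴⁶ attains value exactly 11 on the class-41 Bell expression (whose local bound is 7). -/
import Mathlib


/-- A tripartite box: `P a b c x y z = P(abc|xyz)`. -/
abbrev TriBox := Bool → Bool → Bool → Bool → Bool → Bool → ℝ

/-- The perfect box `P^g`: probability `1/4` iff `a⊕b⊕c = g(x,y,z)`. -/
noncomputable def perfectBox (g : Bool → Bool → Bool → Bool) : TriBox :=
  fun a b c x y z => if Bool.xor a (Bool.xor b c) = g x y z then (1 : ℝ) / 4 else 0

/-- Class-44 polynomial `xyz`. -/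
def f44 (x y z : Bool) : Bool := x && y && z
/-- Class-45 polynomial `xy ⊕ xz`. -/
def f45 (x y z : Bool) : Bool := Bool.xor (x && y) (x && z)
/-- Class-46 polynomial `xy ⊕ yz ⊕ xz`. -/
def f46 (x y z : Bool) : Bool := Bool.xor (x && y) (Bool.xor (y && z) (x && z))
/-- The correlated box polynomial `0`. -/
def fc (_ _ _ : Bool) : Bool := false

/-- The noisy box `P^N_δ = δ P^N + (1−δ) P^c`. -/
noncomputable def mixBox (δ : ℝ) (g : Bool → Bool → Bool → Bool) : TriBox :=
  fun a b c x y z =>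
    δ * perfectBox g a b c x y z + (1 - δ) * perfectBox fc a b c x y z

noncomputable def corr3 (P : TriBox) (x y z : Bool) : ℝ :=
  ∑ a : Bool, ∑ b : Bool, ∑ c : Bool,
    (if Bool.xor a (Bool.xor b c) then (-1 : ℝ) else 1) * P a b c x y z

noncomputable def corrAB (P : TriBox) (x y : Bool) : ℝ :=
  ∑ a : Bool, ∑ b : Bool, ∑ c : Bool,
    (if Bool.xor a b then (-1 : ℝ) else 1) * P a b c x y false

noncomputable def corrAC (P : TriBox) (x z : Bool) : ℝ :=
  ∑ a : Bool, ∑ b : Bool, ∑ c : Bool,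
    (if Bool.xor a c then (-1 : ℝ) else 1) * P a b c x false z

noncomputable def corrBC (P : TriBox) (y z : Bool) : ℝ :=
  ∑ a : Bool, ∑ b : Bool, ∑ c : Bool,
    (if Bool.xor b c then (-1 : ℝ) else 1) * P a b c false y z

noncomputable def corrA (P : TriBox) (x : Bool) : ℝ :=
  ∑ a : Bool, ∑ b : Bool, ∑ c : Bool,
    (if a then (-1 : ℝ) else 1) * P a b c x false false

noncomputable def corrB (P : TriBox) (y : Bool) : ℝ :=
  ∑ a : Bool, ∑ b : Bool, ∑ c : Bool,
    (if b then (-1 : ℝ) else 1) * P a b c false y false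

noncomputable def corrC (P : TriBox) (z : Bool) : ℝ :=
  ∑ a : Bool, ∑ b : Bool, ∑ c : Bool,
    (if c then (-1 : ℝ) else 1) * P a b c false false z

/-- The class-41 Bell expression. -/
noncomputable def bell41 (P : TriBox) : ℝ :=
  -(corrA P false) - corrB P false - corrC P false +
    corrAB P false true + corrAB P true false - corrAB P true true +
    corrAC P false true + corrAC P true false - corrAC P true true +
    corrBC P false false +
    3 * corr3 P false false false + corr3 P false false true +
    corr3 P false true false + 2 * corr3 P false true true +
    4 * corr3 P true false false - corr3 P true false true -
    corr3 P true true false - 2 * corr3 P true true true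

/-- Each of the perfect boxes `P⁴⁴, P⁴⁵, P⁴⁶` attains value exactly `11` on the
class-41 Bell expression (whose local bound is `7`). -/
theorem bell41_perfect_boxes :
    bell41 (perfectBox f44) = 11 ∧ bell41 (perfectBox f45) = 11 ∧
      bell41 (perfectBox f46) = 11 := by
  refine ⟨?_, ?_, ?_⟩ <;>
  · simp only [bell41, corr3, corrAB, corrAC, corrBC, corrA, corrB, corrC,
      perfectBox, f44, f45, f46, Fintype.sum_bool]
    norm_num
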